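/- Let P and Q be probability distributions on a finite set X × [m] and let C be an invertible m×m row-stochastic matrix with corrupted distributions P̃, Q̃ defined by passing labels through C. Then (1/8) · d_JS(P̃, Q̃)² ≤ d_JS(P, Q) ≤ ‖C⁻¹‖_∞ · sqrt(8 · d_JS(P̃, Q̃)). -/

import Mathlib

open Finset

/-- `P` is a probability distribution on `X × Fin m`. -/
def IsProbDist {X : Type*} [Fintype X] {m : ℕ} (P : X → Fin m → ℝ) : Prop :=
  (∀ x y, 0 ≤ P x y) ∧ ∑ x, ∑ y, P x y = 1

/-- Corruption of the label through a noisy channel `C`. -/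
noncomputable def corrupt {X : Type*} [Fintype X] {m : ℕ} (P : X → Fin m → ℝ)
    (C : Matrix (Fin m) (Fin m) ℝ) : X → Fin m → ℝ :=
  fun x yt => ∑ y, P x y * C y yt

/-- `C` is a row-stochastic matrix. -/
def RowStochastic {m : ℕ} (C : Matrix (Fin m) (Fin m) ℝ) : Prop :=
  (∀ i j, 0 ≤ C i j) ∧ ∀ i, ∑ j, C i j = 1

/-- Maximum absolute row sum norm `‖A‖_∞ = max_i ∑_j |A i j|`. -/
noncomputable def maxRowSum {m : ℕ} (A : Matrix (Fin m) (Fin m) ℝ) : ℝ :=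
  ⨆ i, ∑ j, |A i j|

/-- Kullback-Leibler divergence on the finite set `X × Fin m`. -/
noncomputable def klDiv {X : Type*} [Fintype X] {m : ℕ} (P Q : X → Fin m → ℝ) : ℝ :=
  ∑ x, ∑ y, P x y * Real.log (P x y / Q x y)

/-- Jensen-Shannon divergence on the finite set `X × Fin m`. -/
noncomputable def jsDiv {X : Type*} [Fintype X] {m : ℕ} (P Q : X → Fin m → ℝ) : ℝ :=
  (1 / 2) * klDiv P (fun x y => (P x y + Q x y) / 2) +
  (1 / 2) * klDiv Q (fun x y => (P x y + Q x y) / 2)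

/-!
Both divergences are compared with the ℓ¹ distance `‖P - Q‖₁ = 2 d_TV(P, Q)`. Writing a pair of
values as `a = s (1 + t) / 2`, `b = s (1 - t) / 2`, the Jensen-Shannon summand is
`s / 4 · ((1 + t) log (1 + t) + (1 - t) log (1 - t))`, which lies between `s t² / 4` (power series
in `t`) and `s t² / 2` (`log x ≤ x - 1`). Summing, `2 d_JS ≤ ‖P - Q‖₁`, and Cauchy-Schwarz against
the total mass `2` of `P + Q` gives `‖P - Q‖₁² ≤ 8 d_JS`. Finally `P ↦ P C` is Lipschitz for `‖·‖₁`
with constant `‖C‖_∞`, which is at most `1` for a stochastic `C`, and `P = (P C) C⁻¹`.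
-/

open Real

theorem sq_le_one_add_mul_log_add_one_sub_mul_log {t : ℝ} (ht : |t| ≤ 1) :
    t ^ 2 ≤ (1 + t) * log (1 + t) + (1 - t) * log (1 - t) := by
  rcases ht.lt_or_eq with ht | ht
  · obtain ⟨ht₁, ht₂⟩ := abs_lt.mp ht
    have hsq : |t ^ 2| < 1 := by rwa [abs_pow, sq_lt_one_iff₀ (abs_nonneg t)]
    have hsplit : (1 + t) * log (1 + t) + (1 - t) * log (1 - t) =
        t * (log (1 + t) - log (1 - t)) - -log (1 - t ^ 2) := by
      rw [show 1 - t ^ 2 = (1 + t) * (1 - t) by ring, log_mul (by linarith) (by linarith)]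
      ring
    have hseries := ((hasSum_log_sub_log_of_abs_lt_one ht).mul_left t).sub
      (hasSum_pow_div_log_of_abs_lt_one hsq)
    -- The series has nonnegative terms `t ^ (2k + 2) / ((2k + 1)(k + 1))`; the first one is `t²`.
    have hterm (k : ℕ) :
        t * (2 * (1 / (2 * k + 1)) * t ^ (2 * k + 1)) - (t ^ 2) ^ (k + 1) / (k + 1) =
          (t ^ 2) ^ (k + 1) / ((2 * k + 1) * (k + 1)) := by
      field_simp
      ring
    have hfirst := le_hasSum hseries 0 fun k _ => by rw [hterm]; positivity
    rw [hterm] at hfirst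
    rw [hsplit]
    simpa using hfirst
  · rcases (abs_eq zero_le_one).mp ht with rfl | rfl <;>
      norm_num <;> linarith [log_two_gt_d9]

noncomputable def jsSummand (a b : ℝ) : ℝ :=
  (a * log (a / ((a + b) / 2)) + b * log (b / ((a + b) / 2))) / 2

theorem jsDiv_eq_sum_jsSummand {X : Type*} [Fintype X] {m : ℕ} (P Q : X → Fin m → ℝ) :
    jsDiv P Q = ∑ x, ∑ y, jsSummand (P x y) (Q x y) := by
  simp only [jsDiv, klDiv, jsSummand, mul_sum, ← sum_add_distrib]
  congr! 2
  ring

theorem sq_sub_div_add_le_four_mul_jsSummand {a b : ℝ} (ha : 0 ≤ a) (hb : 0 ≤ b) :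
    (a - b) ^ 2 / (a + b) ≤ 4 * jsSummand a b := by
  rcases (add_nonneg ha hb).eq_or_lt with hs | hs
  · obtain rfl : a = 0 := by linarith
    obtain rfl : b = 0 := by linarith
    simp [jsSummand]
  set t := (a - b) / (a + b)
  have ha' : (a + b) * (1 + t) = 2 * a := by simp only [t]; field_simp; ring
  have hb' : (a + b) * (1 - t) = 2 * b := by simp only [t]; field_simp; ring
  have hat : a / ((a + b) / 2) = 1 + t := by field_simp; linarith
  have hbt : b / ((a + b) / 2) = 1 - t := by field_simp; linarith
  have ht : |t| ≤ 1 := by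
    rw [abs_div, abs_of_pos hs, div_le_one hs, abs_le]
    constructor <;> linarith
  calc (a - b) ^ 2 / (a + b) = (a + b) * t ^ 2 := by simp only [t]; field_simp
    _ ≤ (a + b) * ((1 + t) * log (1 + t) + (1 - t) * log (1 - t)) :=
      mul_le_mul_of_nonneg_left (sq_le_one_add_mul_log_add_one_sub_mul_log ht) hs.le
    _ = 4 * jsSummand a b := by
      rw [jsSummand, hat, hbt]
      linear_combination log (1 + t) * ha' + log (1 - t) * hb'

theorem two_mul_jsSummand_le_sq_sub_div_add {a b : ℝ} (ha : 0 ≤ a) (hb : 0 ≤ b) :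
    2 * jsSummand a b ≤ (a - b) ^ 2 / (a + b) := by
  rcases (add_nonneg ha hb).eq_or_lt with hs | hs
  · obtain rfl : a = 0 := by linarith
    obtain rfl : b = 0 := by linarith
    simp [jsSummand]
  have mul_log_le {c : ℝ} (hc : 0 ≤ c) :
      c * log (c / ((a + b) / 2)) ≤ c * (c / ((a + b) / 2) - 1) := by
    rcases hc.eq_or_lt with rfl | hc
    · simp
    exact mul_le_mul_of_nonneg_left (log_le_sub_one_of_pos (by positivity)) hc.le
  calc 2 * jsSummand a b ≤ a * (a / ((a + b) / 2) - 1) + b * (b / ((a + b) / 2) - 1) := by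
        rw [jsSummand]; linarith [mul_log_le ha, mul_log_le hb]
    _ = (a - b) ^ 2 / (a + b) := by field_simp; ring

theorem sq_sub_div_add_le_abs_sub {a b : ℝ} (ha : 0 ≤ a) (hb : 0 ≤ b) :
    (a - b) ^ 2 / (a + b) ≤ |a - b| := by
  rcases (add_nonneg ha hb).eq_or_lt with hs | hs
  · simp [← hs]
  rw [div_le_iff₀ hs, ← sq_abs, sq]
  exact mul_le_mul_of_nonneg_left (abs_sub_le_iff.mpr ⟨by linarith, by linarith⟩) (abs_nonneg _)

theorem sq_sum_abs_sub_le_sum_add_mul_sum_sq_sub_div_add {ι : Type*} (s : Finset ι)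
    {a b : ι → ℝ} (ha : ∀ i ∈ s, 0 ≤ a i) (hb : ∀ i ∈ s, 0 ≤ b i) :
    (∑ i ∈ s, |a i - b i|) ^ 2 ≤
      (∑ i ∈ s, (a i + b i)) * ∑ i ∈ s, (a i - b i) ^ 2 / (a i + b i) := by
  refine sum_sq_le_sum_mul_sum_of_sq_le_mul s (fun i hi => add_nonneg (ha i hi) (hb i hi))
    (fun i hi => div_nonneg (sq_nonneg _) (add_nonneg (ha i hi) (hb i hi))) fun i hi => ?_
  rcases (add_nonneg (ha i hi) (hb i hi)).eq_or_lt with hs | hs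
  · obtain ⟨hai, hbi⟩ : a i = 0 ∧ b i = 0 := by
      constructor <;> linarith [ha i hi, hb i hi]
    simp [hai, hbi]
  rw [sq_abs, mul_div_cancel₀ _ hs.ne']

section

variable {X : Type*} [Fintype X] {m : ℕ}

noncomputable def l1Dist (P Q : X → Fin m → ℝ) : ℝ :=
  ∑ x, ∑ y, |P x y - Q x y|

theorem l1Dist_nonneg (P Q : X → Fin m → ℝ) : 0 ≤ l1Dist P Q :=
  sum_nonneg fun _ _ => sum_nonneg fun _ _ => abs_nonneg _

theorem two_mul_jsDiv_le_l1Dist {P Q : X → Fin m → ℝ} (hP : ∀ x y, 0 ≤ P x y)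
    (hQ : ∀ x y, 0 ≤ Q x y) : 2 * jsDiv P Q ≤ l1Dist P Q := by
  simp only [jsDiv_eq_sum_jsSummand, l1Dist, mul_sum]
  gcongr with x _ y _
  exact (two_mul_jsSummand_le_sq_sub_div_add (hP x y) (hQ x y)).trans
    (sq_sub_div_add_le_abs_sub (hP x y) (hQ x y))

theorem sq_l1Dist_le_eight_mul_jsDiv {P Q : X → Fin m → ℝ} (hP : IsProbDist P)
    (hQ : IsProbDist Q) : l1Dist P Q ^ 2 ≤ 8 * jsDiv P Q := by
  have hmass : ∑ p : X × Fin m, (P p.1 p.2 + Q p.1 p.2) = 2 := by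
    rw [sum_add_distrib, Fintype.sum_prod_type', Fintype.sum_prod_type', hP.2, hQ.2]
    norm_num
  have hjs : ∑ p : X × Fin m, (P p.1 p.2 - Q p.1 p.2) ^ 2 / (P p.1 p.2 + Q p.1 p.2) ≤
      4 * jsDiv P Q := by
    simp only [jsDiv_eq_sum_jsSummand, Fintype.sum_prod_type, mul_sum]
    gcongr with x _ y _
    exact sq_sub_div_add_le_four_mul_jsSummand (hP.1 x y) (hQ.1 x y)
  have hcs := sq_sum_abs_sub_le_sum_add_mul_sum_sq_sub_div_add univ
    (a := fun p : X × Fin m => P p.1 p.2) (b := fun p => Q p.1 p.2)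
    (fun p _ => hP.1 p.1 p.2) (fun p _ => hQ.1 p.1 p.2)
  rw [hmass, Fintype.sum_prod_type] at hcs
  rw [l1Dist]
  linarith

theorem jsDiv_nonneg {P Q : X → Fin m → ℝ} (hP : IsProbDist P) (hQ : IsProbDist Q) :
    0 ≤ jsDiv P Q := by
  linarith [sq_l1Dist_le_eight_mul_jsDiv hP hQ, sq_nonneg (l1Dist P Q)]

theorem IsProbDist.corrupt {P : X → Fin m → ℝ} (hP : IsProbDist P)
    {C : Matrix (Fin m) (Fin m) ℝ} (hC : RowStochastic C) : IsProbDist (corrupt P C) := by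
  refine ⟨fun x z => sum_nonneg fun y _ => mul_nonneg (hP.1 x y) (hC.1 y z), ?_⟩
  calc ∑ x, ∑ z, _root_.corrupt P C x z = ∑ x, ∑ y, P x y * ∑ z, C y z := by
        simp only [_root_.corrupt, mul_sum]
        exact sum_congr rfl fun x _ => sum_comm
    _ = 1 := by simpa only [hC.2, mul_one] using hP.2

-- `corrupt P A` is definitionally the matrix product `P * A`.
theorem corrupt_corrupt (P : X → Fin m → ℝ) (A B : Matrix (Fin m) (Fin m) ℝ) :
    corrupt (corrupt P A) B = corrupt P (A * B) :=
  Matrix.mul_assoc (α := ℝ) P A B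

theorem corrupt_one (P : X → Fin m → ℝ) : corrupt P 1 = P :=
  Matrix.mul_one (α := ℝ) P

theorem sum_abs_le_maxRowSum (A : Matrix (Fin m) (Fin m) ℝ) (i : Fin m) :
    ∑ j, |A i j| ≤ maxRowSum A :=
  le_ciSup (f := fun i => ∑ j, |A i j|) (Set.finite_range _).bddAbove i

theorem maxRowSum_nonneg (A : Matrix (Fin m) (Fin m) ℝ) : 0 ≤ maxRowSum A :=
  Real.iSup_nonneg fun _ => sum_nonneg fun _ _ => abs_nonneg _

theorem RowStochastic.maxRowSum_le_one {C : Matrix (Fin m) (Fin m) ℝ} (hC : RowStochastic C) :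
    maxRowSum C ≤ 1 :=
  Real.iSup_le (fun i => by simp_rw [abs_of_nonneg (hC.1 i _), hC.2 i, le_refl]) zero_le_one

theorem l1Dist_corrupt_le (P Q : X → Fin m → ℝ) (A : Matrix (Fin m) (Fin m) ℝ) :
    l1Dist (corrupt P A) (corrupt Q A) ≤ maxRowSum A * l1Dist P Q := by
  rw [l1Dist, l1Dist, mul_sum]
  gcongr with x _
  calc ∑ z, |corrupt P A x z - corrupt Q A x z|
      = ∑ z, |∑ y, (P x y - Q x y) * A y z| := by
        simp only [_root_.corrupt, ← sum_sub_distrib, sub_mul]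
    _ ≤ ∑ z, ∑ y, |P x y - Q x y| * |A y z| := by
        gcongr with z _
        exact (abs_sum_le_sum_abs _ _).trans_eq (by simp only [abs_mul])
    _ = ∑ y, |P x y - Q x y| * ∑ z, |A y z| := by
        rw [sum_comm]; simp only [mul_sum]
    _ ≤ ∑ y, |P x y - Q x y| * maxRowSum A := by
        gcongr with y _
        exact sum_abs_le_maxRowSum A y
    _ = maxRowSum A * ∑ y, |P x y - Q x y| := by
        rw [← sum_mul, mul_comm]

end

theorem jsDiv_corrupt_bounds_general {X : Type*} [Fintype X] {m : ℕ}
    (P Q : X → Fin m → ℝ) (hP : IsProbDist P) (hQ : IsProbDist Q)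
    (C Cinv : Matrix (Fin m) (Fin m) ℝ) (hC : RowStochastic C)
    (hCinv₁ : C * Cinv = 1) :
    (1 / 8) * jsDiv (corrupt P C) (corrupt Q C) ^ 2 ≤ jsDiv P Q ∧
    jsDiv P Q ≤ maxRowSum Cinv * Real.sqrt (8 * jsDiv (corrupt P C) (corrupt Q C)) := by
  set P' := corrupt P C
  set Q' := corrupt Q C
  have hP' : IsProbDist P' := hP.corrupt hC
  have hQ' : IsProbDist Q' := hQ.corrupt hC
  have hcontract : l1Dist P' Q' ≤ l1Dist P Q :=
    (l1Dist_corrupt_le P Q C).trans <|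
      mul_le_of_le_one_left (l1Dist_nonneg P Q) hC.maxRowSum_le_one
  have hexpand : l1Dist P Q ≤ maxRowSum Cinv * l1Dist P' Q' := by
    simpa only [P', Q', corrupt_corrupt, hCinv₁, corrupt_one] using l1Dist_corrupt_le P' Q' Cinv
  constructor
  · calc (1 / 8) * jsDiv P' Q' ^ 2 ≤ (1 / 8) * (l1Dist P Q / 2) ^ 2 := by
          gcongr
          · exact jsDiv_nonneg hP' hQ'
          · linarith [two_mul_jsDiv_le_l1Dist hP'.1 hQ'.1]
      _ ≤ jsDiv P Q := by
          nlinarith [sq_l1Dist_le_eight_mul_jsDiv hP hQ, jsDiv_nonneg hP hQ]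
  · calc jsDiv P Q ≤ l1Dist P Q := by
          linarith [two_mul_jsDiv_le_l1Dist hP.1 hQ.1, jsDiv_nonneg hP hQ]
      _ ≤ maxRowSum Cinv * l1Dist P' Q' := hexpand
      _ ≤ maxRowSum Cinv * Real.sqrt (8 * jsDiv P' Q') := by
          gcongr
          · exact maxRowSum_nonneg Cinv
          · exact (le_abs_self _).trans (abs_le_sqrt (sq_l1Dist_le_eight_mul_jsDiv hP' hQ'))

theorem jsDiv_corrupt_bounds {X : Type*} [Fintype X] {m : ℕ}
    (P Q : X → Fin m → ℝ) (hP : IsProbDist P) (hQ : IsProbDist Q)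
    (C Cinv : Matrix (Fin m) (Fin m) ℝ) (hC : RowStochastic C)
    (hCinv₁ : C * Cinv = 1) (hCinv₂ : Cinv * C = 1) :
    (1 / 8) * jsDiv (corrupt P C) (corrupt Q C) ^ 2 ≤ jsDiv P Q ∧
    jsDiv P Q ≤ maxRowSum Cinv * Real.sqrt (8 * jsDiv (corrupt P C) (corrupt Q C)) :=
  jsDiv_corrupt_bounds_general P Q hP hQ C Cinv hC hCinv₁
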